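/- If P, Q, R are closed under stuttering, then □(↑Q ∧ ◇↑R ⇒ ○(¬↑R U P) ∧ ¬↑R) is closed under stuttering, where ↑X := ¬X ∧ ○X. -/

import Mathlib

def State := String → Bool

def StSeq := ℕ → State

def drop (k : ℕ) (s : StSeq) : StSeq := fun n => s (k + n)

def stutter (s : StSeq) (i : ℕ) : StSeq := fun n => if n ≤ i then s n else s (n - 1)

def CUS (F : StSeq → Prop) : Prop := ∀ (s : StSeq) (i : ℕ), F s ↔ F (stutter s i)

def Var (a : String) : StSeq → Prop := fun s => s 0 a = true

def Not' (F : StSeq → Prop) : StSeq → Prop := fun s => ¬ F s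

def And' (F G : StSeq → Prop) : StSeq → Prop := fun s => F s ∧ G s

def Or' (F G : StSeq → Prop) : StSeq → Prop := fun s => F s ∨ G s

def Imp' (F G : StSeq → Prop) : StSeq → Prop := fun s => F s → G s

def Iff' (F G : StSeq → Prop) : StSeq → Prop := fun s => F s ↔ G s

def Next (F : StSeq → Prop) : StSeq → Prop := fun s => F (drop 1 s)

def Always (F : StSeq → Prop) : StSeq → Prop := fun s => ∀ k, F (drop k s)

def Ev (F : StSeq → Prop) : StSeq → Prop := fun s => ∃ k, F (drop k s)

def Until' (F G : StSeq → Prop) : StSeq → Prop :=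
  fun s => ∃ k, G (drop k s) ∧ ∀ j < k, F (drop j s)

def Up (F : StSeq → Prop) : StSeq → Prop := And' (Not' F) (Next F)

def Down (F : StSeq → Prop) : StSeq → Prop := And' F (Next (Not' F))

def AnyEdge (F : StSeq → Prop) : StSeq → Prop := Or' (Up F) (Down F)

/-!
An edge `↑X` of a stutter-closed `X` is not itself closed under stuttering, since duplicating the first
state destroys an edge at position `0`; but it is closed under stuttering at every later position, and
it is false on every sequence whose first two states coincide. Stuttering `s` at `i` stutters the
suffixes starting before `i`, shifts those starting after `i` by one, and inserts a single new suffix at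
`i`, which begins with two equal states. At that suffix `↑Q` fails, so the body of `□` holds, and
`¬↑R` holds, so `U` may step over it; no eventuality of `◇` or `U` is fulfilled only there.
-/

def CUSPos (F : StSeq → Prop) : Prop := ∀ (s : StSeq) (i : ℕ), 0 < i → (F s ↔ F (stutter s i))

lemma drop_zero (s : StSeq) : drop 0 s = s := by
  funext n; simp [drop]

lemma drop_stutter_of_le {k i : ℕ} (h : k ≤ i) (s : StSeq) :
    drop k (stutter s i) = stutter (drop k s) (i - k) := by
  funext n
  simp only [drop, stutter]
  split_ifs <;> first | rfl | omega | congr 1; omega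

lemma drop_stutter_of_lt {k i : ℕ} (h : i < k) (s : StSeq) :
    drop k (stutter s i) = drop (k - 1) s := by
  funext n
  simp only [drop, stutter]
  split_ifs <;> first | omega | congr 1; omega

lemma drop_succ_stutter_of_le {k i : ℕ} (h : i ≤ k) (s : StSeq) :
    drop (k + 1) (stutter s i) = drop k s := by
  simpa using drop_stutter_of_lt (Nat.lt_succ_of_le h) s

lemma CUS.cusPos {F : StSeq → Prop} (hF : CUS F) : CUSPos F :=
  fun s i _ => hF s i

lemma CUS.not {F : StSeq → Prop} (hF : CUS F) : CUS (Not' F) :=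
  fun s i => not_congr (hF s i)

lemma CUSPos.not {F : StSeq → Prop} (hF : CUSPos F) : CUSPos (Not' F) :=
  fun s i hi => not_congr (hF s i hi)

lemma CUSPos.and {F G : StSeq → Prop} (hF : CUSPos F) (hG : CUSPos G) : CUSPos (And' F G) :=
  fun s i hi => and_congr (hF s i hi) (hG s i hi)

lemma CUSPos.imp {F G : StSeq → Prop} (hF : CUSPos F) (hG : CUSPos G) : CUSPos (Imp' F G) :=
  fun s i hi => imp_congr (hF s i hi) (hG s i hi)

lemma CUS.next_cusPos {F : StSeq → Prop} (hF : CUS F) : CUSPos (Next F) := by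
  intro s i hi
  simp only [Next]
  rw [drop_stutter_of_le hi]
  exact hF _ _

lemma CUS.up_cusPos {F : StSeq → Prop} (hF : CUS F) : CUSPos (Up F) :=
  hF.not.cusPos.and hF.next_cusPos

lemma CUSPos.drop_stutter {F : StSeq → Prop} (hF : CUSPos F) {j i : ℕ} (h : j < i) (s : StSeq) :
    F (drop j (stutter s i)) ↔ F (drop j s) := by
  rw [drop_stutter_of_le h.le]
  exact (hF _ _ (Nat.sub_pos_of_lt h)).symm

lemma not_up_stutter_zero {F : StSeq → Prop} (hF : CUS F) (s : StSeq) : ¬ Up F (stutter s 0) := by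
  rintro ⟨hnot, hnext⟩
  have hdrop : drop 1 (stutter s 0) = s := by rw [drop_stutter_of_lt Nat.zero_lt_one, drop_zero]
  exact hnot ((hF s 0).mp (hdrop ▸ hnext))

lemma until_stutter_of_until {G H : StSeq → Prop} (hG : CUSPos G) (hG₀ : ∀ s, G (stutter s 0))
    (hH : CUSPos H) {s : StSeq} (i : ℕ) (hs : Until' G H s) : Until' G H (stutter s i) := by
  obtain ⟨k, hk, hpre⟩ := hs
  rcases lt_or_ge k i with hki | hik
  · refine ⟨k, (hH.drop_stutter hki s).mpr hk, fun j hj => ?_⟩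
    exact (hG.drop_stutter (hj.trans hki) s).mpr (hpre j hj)
  · refine ⟨k + 1, by rwa [drop_succ_stutter_of_le hik], fun j hj => ?_⟩
    rcases lt_trichotomy j i with hji | rfl | hij
    · exact (hG.drop_stutter hji s).mpr (hpre j (by omega))
    · rw [drop_stutter_of_le le_rfl, Nat.sub_self]
      exact hG₀ _
    · rw [drop_stutter_of_lt hij]
      exact hpre (j - 1) (by omega)

lemma until_of_until_stutter {G H : StSeq → Prop} (hG : CUSPos G) (hH : CUSPos H)
    (hH₀ : ∀ s, H (stutter s 0) → H s) {s : StSeq} (i : ℕ) (hs : Until' G H (stutter s i)) :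
    Until' G H s := by
  obtain ⟨k, hk, hpre⟩ := hs
  have hpre_lt : ∀ j < min k i, G (drop j s) := fun j hj =>
    (hG.drop_stutter (lt_of_lt_of_le hj (min_le_right k i)) s).mp (hpre j (by omega))
  rcases lt_trichotomy k i with hki | rfl | hik
  · exact ⟨k, (hH.drop_stutter hki s).mp hk, fun j hj => hpre_lt j (by omega)⟩
  · rw [drop_stutter_of_le le_rfl, Nat.sub_self] at hk
    exact ⟨k, hH₀ _ hk, fun j hj => hpre_lt j (by omega)⟩
  · refine ⟨k - 1, by rwa [drop_stutter_of_lt hik] at hk, fun j hj => ?_⟩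
    rcases lt_or_ge j i with hji | hij
    · exact hpre_lt j (by omega)
    · rw [← drop_succ_stutter_of_le hij]
      exact hpre (j + 1) (by omega)

lemma cus_until {G H : StSeq → Prop} (hG : CUSPos G) (hG₀ : ∀ s, G (stutter s 0))
    (hH : CUSPos H) (hH₀ : ∀ s, H (stutter s 0) → H s) : CUS (Until' G H) :=
  fun _ i => ⟨until_stutter_of_until hG hG₀ hH i, until_of_until_stutter hG hH hH₀ i⟩

lemma cusPos_true : CUSPos fun _ => True :=
  fun _ _ _ => Iff.rfl

lemma cus_ev {H : StSeq → Prop} (hH : CUSPos H) (hH₀ : ∀ s, H (stutter s 0) → H s) : CUS (Ev H) := by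
  have hEv : Ev H = Until' (fun _ => True) H := by
    funext s; simp [Ev, Until']
  rw [hEv]
  exact cus_until cusPos_true (fun _ => trivial) hH hH₀

lemma cus_always {G : StSeq → Prop} (hG : CUSPos G) (hG₀ : ∀ s, G (stutter s 0)) :
    CUS (Always G) := by
  have hAlways : Always G = Not' (Until' (fun _ => True) (Not' G)) := by
    funext s; simp [Always, Until', Not']
  rw [hAlways]
  exact (cus_until cusPos_true (fun _ => trivial) hG.not fun s h => (h (hG₀ s)).elim).not

theorem pattern_D1 (P Q R : StSeq → Prop) (hP : CUS P) (hQ : CUS Q) (hR : CUS R) :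
    CUS (Always (Imp' (And' (Up Q) (Ev (Up R)))
      (And' (Next (Until' (Not' (Up R)) P)) (Not' (Up R))))) := by
  have hUpR₀ : ∀ s, ¬ Up R (stutter s 0) := not_up_stutter_zero hR
  have hEv : CUS (Ev (Up R)) := cus_ev hR.up_cusPos fun s h => (hUpR₀ s h).elim
  have hUntil : CUS (Until' (Not' (Up R)) P) :=
    cus_until hR.up_cusPos.not hUpR₀ hP.cusPos fun s => (hP s 0).mpr
  refine cus_always ((hQ.up_cusPos.and hEv.cusPos).imp (hUntil.next_cusPos.and hR.up_cusPos.not)) ?_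
  exact fun s h => (not_up_stutter_zero hQ s h.1).elim
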